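/- arXiv:2403.18247 — 2 statements merged into one kernel-verified Lean document; each statement's English description precedes it below -/
import Mathlib

section
/- Let X = [[0,1],[1,0]] and Z = [[1,0],[0,-1]] be the Pauli matrices over ℂ. Fix n ≥ 1. For a key k : Fin n → {0,1}×{0,1} with k i = (aᵢ,bᵢ), let E_k be the matrix indexed by (Fin n → Fin 2) with entries E_k(v,w) = ∏_i (X^{bᵢ} Z^{aᵢ})(v i, w i) (the n-fold tensor product of the single-qubit encryption operators). Then for every complex matrix ρ indexed by (Fin n → Fin 2), averaging over all 4^n keys gives the maximally mixed state: (1/4^n) · ∑_{k} E_k · ρ · E_kᴴ = (trace(ρ)/2^n) · 1. Hence the n-qubit quantum one-time pad with a uniformly random 2n-bit key is information-theoretically secure. -/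
open Matrix

/-- The Pauli `X` matrix. -/
def pauliX : Matrix (Fin 2) (Fin 2) ℂ := !![0, 1; 1, 0]

/-- The Pauli `Z` matrix. -/
def pauliZ : Matrix (Fin 2) (Fin 2) ℂ := !![1, 0; 0, -1]

/-- The `n`-qubit quantum one-time-pad encryption matrix for key `k`,
the `n`-fold tensor (Kronecker) product of the single-qubit encryption
operators `X^{bᵢ} · Z^{aᵢ}`, given entrywise. -/
noncomputable def qotpEnc (n : ℕ) (k : Fin n → Fin 2 × Fin 2) :
    Matrix (Fin n → Fin 2) (Fin n → Fin 2) ℂ :=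
  fun v w => ∏ i : Fin n,
    (pauliX ^ ((k i).2 : ℕ) * pauliZ ^ ((k i).1 : ℕ)) (v i) (w i)

lemma keySum (α β γ δ : Fin 2) :
    ∑ κ : Fin 2 × Fin 2,
      (pauliX ^ ((κ.2 : ℕ)) * pauliZ ^ ((κ.1 : ℕ))) α β *
        (starRingEnd ℂ) ((pauliX ^ ((κ.2 : ℕ)) * pauliZ ^ ((κ.1 : ℕ))) γ δ) =
      if α = γ ∧ β = δ then 2 else 0 := by
  fin_cases α <;> fin_cases β <;> fin_cases γ <;> fin_cases δ <;>
    simp [Fintype.sum_prod_type, Fin.sum_univ_two, pauliX, pauliZ, pow_succ,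
      Matrix.mul_apply, Fin.isValue] <;> norm_num

/-- Information-theoretic security of the `n`-qubit quantum one-time pad:
for every matrix `ρ` indexed by `Fin n → Fin 2`, averaging the encrypted state
`E_k · ρ · E_kᴴ` over all `4^n` keys yields the maximally mixed state
`(trace ρ / 2^n) • 1`. -/
theorem qotp_n_qubit_security (n : ℕ) (hn : 1 ≤ n)
    (ρ : Matrix (Fin n → Fin 2) (Fin n → Fin 2) ℂ) :
    (1 / 4 ^ n : ℂ) • ∑ k : Fin n → Fin 2 × Fin 2,
        qotpEnc n k * ρ * (qotpEnc n k)ᴴ =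
      (ρ.trace / 2 ^ n) • (1 : Matrix (Fin n → Fin 2) (Fin n → Fin 2) ℂ) := by
  ext v w
  simp only [Matrix.smul_apply, Matrix.sum_apply, Matrix.mul_apply,
    Matrix.conjTranspose_apply, smul_eq_mul, Finset.sum_mul]
  simp only [qotpEnc]
  -- now LHS : 1/4^n * ∑ k, ∑ x, ∑ y, (∏ ..) * ρ y x * conj (∏ ..)
  have key : ∀ x y : Fin n → Fin 2,
      (∑ k : Fin n → Fin 2 × Fin 2,
        (∏ i, (pauliX ^ (((k i).2 : ℕ)) * pauliZ ^ (((k i).1 : ℕ))) (v i) (y i)) *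
          (starRingEnd ℂ)
            (∏ i, (pauliX ^ (((k i).2 : ℕ)) * pauliZ ^ (((k i).1 : ℕ))) (w i) (x i))) =
      if v = w ∧ y = x then (2 : ℂ) ^ n else 0 := by
    intro x y
    have h1 : ∀ k : Fin n → Fin 2 × Fin 2,
        (∏ i, (pauliX ^ (((k i).2 : ℕ)) * pauliZ ^ (((k i).1 : ℕ))) (v i) (y i)) *
          (starRingEnd ℂ)
            (∏ i, (pauliX ^ (((k i).2 : ℕ)) * pauliZ ^ (((k i).1 : ℕ))) (w i) (x i)) =
        ∏ i, ((pauliX ^ (((k i).2 : ℕ)) * pauliZ ^ (((k i).1 : ℕ))) (v i) (y i) *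
          (starRingEnd ℂ) ((pauliX ^ (((k i).2 : ℕ)) * pauliZ ^ (((k i).1 : ℕ))) (w i) (x i))) := by
      intro k
      rw [map_prod, ← Finset.prod_mul_distrib]
    simp_rw [h1]
    have hps := Finset.prod_univ_sum (fun _ : Fin n => (Finset.univ : Finset (Fin 2 × Fin 2)))
      (fun i κ => (pauliX ^ ((κ.2 : ℕ)) * pauliZ ^ ((κ.1 : ℕ))) (v i) (y i) *
        (starRingEnd ℂ) ((pauliX ^ ((κ.2 : ℕ)) * pauliZ ^ ((κ.1 : ℕ))) (w i) (x i)))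
    rw [Fintype.piFinset_univ] at hps
    rw [← hps]
    have h2 : ∀ i : Fin n,
        (∑ κ : Fin 2 × Fin 2,
          (pauliX ^ ((κ.2 : ℕ)) * pauliZ ^ ((κ.1 : ℕ))) (v i) (y i) *
            (starRingEnd ℂ) ((pauliX ^ ((κ.2 : ℕ)) * pauliZ ^ ((κ.1 : ℕ))) (w i) (x i))) =
        if v i = w i ∧ y i = x i then (2:ℂ) else 0 := fun i => keySum _ _ _ _
    simp_rw [h2]
    by_cases h : v = w ∧ y = x
    · simp [h.1, h.2, Finset.prod_const]
    · rw [if_neg h]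
      rw [not_and_or] at h
      rcases h with h | h <;>
      · obtain ⟨i, hi⟩ := Function.ne_iff.mp h
        exact Finset.prod_eq_zero (Finset.mem_univ i) (by simp [hi])
  simp_rw [mul_assoc, mul_comm (ρ _ _)]
  rw [Finset.sum_comm]
  have hswap : ∀ x : Fin n → Fin 2,
      (∑ k : Fin n → Fin 2 × Fin 2, ∑ y : Fin n → Fin 2,
        (∏ i, (pauliX ^ (((k i).2 : ℕ)) * pauliZ ^ (((k i).1 : ℕ))) (v i) (y i)) *
          (star (∏ i, (pauliX ^ (((k i).2 : ℕ)) * pauliZ ^ (((k i).1 : ℕ))) (w i) (x i)) * ρ y x)) =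
      ∑ y : Fin n → Fin 2, (if v = w ∧ y = x then (2:ℂ) ^ n else 0) * ρ y x := by
    intro x
    rw [Finset.sum_comm]
    refine Finset.sum_congr rfl fun y _ => ?_
    simp_rw [← mul_assoc]
    rw [← Finset.sum_mul]
    simp only [Complex.star_def]
    rw [key x y]
  simp_rw [hswap]
  by_cases h : v = w
  · subst h
    simp only [eq_self_iff_true, true_and, Matrix.one_apply_eq, mul_one]
    have : ∀ x : Fin n → Fin 2,
        (∑ y : Fin n → Fin 2, (if y = x then (2:ℂ) ^ n else 0) * ρ y x) = 2 ^ n * ρ x x := by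
      intro x
      rw [Finset.sum_eq_single x (fun y _ hy => by simp [hy]) (by simp)]
      simp
    simp_rw [this]
    rw [← Finset.mul_sum, Matrix.trace]
    simp only [Matrix.diag]
    have h2 : (2:ℂ) ^ n ≠ 0 := pow_ne_zero _ two_ne_zero
    rw [show ((4:ℂ)) ^ n = 2 ^ n * 2 ^ n by rw [← mul_pow]; norm_num]
    field_simp
  · simp [h, Matrix.one_apply_ne h]
end

section
/- Let X = [[0,1],[1,0]] and Z = [[1,0],[0,-1]] be the Pauli matrices over ℂ, and let U(φ) = (1/√2)·[[1, −1], [e^{iφ}, e^{iφ}]]. For every φ ∈ (0, 2π) and every nontrivial single-qubit Pauli operator V ∈ {X, Z, X·Z}, V does not commute with U(φ): V · U(φ) ≠ U(φ) · V. Hence an attacker who applies a nontrivial Pauli operator V to a valid message–signature pair (V|P⟩, V|S⟩, |ID⟩) produces an invalid pair, since V|S⟩ = E(V·U|P⟩) ≠ E(U·V|P⟩); i.e., the scheme is secure against the commutative Pauli-operator forgery attack. -/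
open Matrix Complex

/-- The signing unitary `U(φ) = (1/√2) · [[1, −1], [e^{iφ}, e^{iφ}]]`
used in the quantum identity-based signature scheme. -/
noncomputable def Uphi (φ : ℝ) : Matrix (Fin 2) (Fin 2) ℂ :=
  (1 / (Real.sqrt 2 : ℂ)) •
    !![(1 : ℂ), -1; Complex.exp (I * φ), Complex.exp (I * φ)]

/-- Security against the commutative Pauli-operator forgery attack: for every
secret phase `φ ∈ (0, 2π)`, no nontrivial single-qubit Pauli operator
`V ∈ {X, Z, X·Z}` commutes with the signing unitary `U(φ)`. -/
theorem Uphi_not_commute_pauli (φ : ℝ) (hφ : φ ∈ Set.Ioo 0 (2 * Real.pi))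
    (V : Matrix (Fin 2) (Fin 2) ℂ)
    (hV : V ∈ ({pauliX, pauliZ, pauliX * pauliZ} : Set (Matrix (Fin 2) (Fin 2) ℂ))) :
    V * Uphi φ ≠ Uphi φ * V := by
  have hs : ((Real.sqrt 2 : ℝ) : ℂ) ≠ 0 := by
    simp [Real.sqrt_ne_zero'.2 (by norm_num : (0:ℝ) < 2)]
  have hinv : ((Real.sqrt 2 : ℝ) : ℂ)⁻¹ ≠ 0 := inv_ne_zero hs
  have hexp1 : Complex.exp (I * φ) ≠ 1 := by
    intro h
    rw [Complex.exp_eq_one_iff] at h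
    obtain ⟨n, hn⟩ := h
    have him := congrArg Complex.im hn
    simp [Complex.mul_im, Complex.mul_re] at him
    obtain ⟨h1, h2⟩ := hφ
    rw [him] at h1 h2
    have hp := Real.pi_pos
    have hn1 : (0:ℤ) < n := by exact_mod_cast (by nlinarith : (0:ℝ) < n)
    have hn2 : (n:ℤ) < 1 := by exact_mod_cast (by nlinarith : (n:ℝ) < 1)
    omega
  rcases hV with h | h | h <;> subst h <;> intro h <;>
    rw [← Matrix.ext_iff] at h
  · have h00 := h 0 0
    have h01 := h 0 1
    simp [Uphi, pauliX, Matrix.mul_apply, Fin.sum_univ_two, hs] at h00 h01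
    exact hexp1 h01
  · have h01 := h 0 1
    simp [Uphi, pauliZ, Matrix.mul_apply, Fin.sum_univ_two, hs] at h01
    exact hinv (by linear_combination -h01 / 2)
  · have h00 := h 0 0
    simp [Uphi, pauliX, pauliZ, Matrix.mul_apply, Fin.sum_univ_two, hs] at h00
    exact hexp1 h00
end
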